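/- arXiv:2602.15674 — 4 statements merged into one kernel-verified Lean document; each statement's English description precedes it below -/
import Mathlib

section
/- Let Y be a finite set, let q be a probability distribution on Y with full support, let u : Y → ℝ, and let λ > 0 and μ < 1/λ. Set κ = 1/λ − μ and β = 1/(1 − λμ). Then the function p ↦ Σ_y u(y)·p(y) + (1/λ)·KL(p‖q) + μ·H(p), where KL is relative entropy and H is Shannon entropy (natural log), attains a unique minimum over the probability simplex Δ(Y), and the minimizer is the Gibbs distribution p̂(y) = exp(−u(y)/κ)·q(y)^β / Σ_z exp(−u(z)/κ)·q(z)^β. -/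
open Finset Real

/-- Shannon entropy (natural log). -/
noncomputable def shannonEntropy {Y : Type*} [Fintype Y] (p : Y → ℝ) : ℝ :=
  -∑ y, p y * Real.log (p y)

/-- Relative entropy (Kullback–Leibler divergence), natural log,
with the convention `0 * log 0 = 0`. -/
noncomputable def klDiv {Y : Type*} [Fintype Y] (p q : Y → ℝ) : ℝ :=
  ∑ y, p y * Real.log (p y / q y)

/-- Strict Gibbs inequality. -/
lemma gibbs_aux {Y : Type*} [Fintype Y] (p r : Y → ℝ) (hp : ∀ y, 0 ≤ p y)
    (hp1 : ∑ y, p y = 1) (hr : ∀ y, 0 < r y) (hr1 : ∑ y, r y = 1) (hne : p ≠ r) :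
    0 < ∑ y, p y * (Real.log (p y) - Real.log (r y)) := by
  obtain ⟨y0, hy0⟩ := Function.ne_iff.mp hne
  have key : ∑ y, p y * (Real.log (r y) - Real.log (p y)) < ∑ y, (r y - p y) := by
    apply Finset.sum_lt_sum
    · intro i _
      rcases eq_or_lt_of_le (hp i) with h | h
      · simp [← h, le_of_lt (hr i)]
      · have hlog := Real.log_le_sub_one_of_pos (div_pos (hr i) h)
        rw [Real.log_div (ne_of_gt (hr i)) (ne_of_gt h)] at hlog
        have := mul_le_mul_of_nonneg_left hlog (le_of_lt h)
        calc p i * (Real.log (r i) - Real.log (p i)) ≤ p i * (r i / p i - 1) := this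
          _ = r i - p i := by field_simp
    · refine ⟨y0, Finset.mem_univ y0, ?_⟩
      rcases eq_or_lt_of_le (hp y0) with h | h
      · simp only [← h, zero_mul, sub_zero]
        exact hr y0
      · have hne1 : r y0 / p y0 ≠ 1 := by
          intro hc
          exact hy0 ((div_eq_one_iff_eq (ne_of_gt h)).mp hc).symm
        have hlog := Real.log_lt_sub_one_of_pos (div_pos (hr y0) h) hne1
        rw [Real.log_div (ne_of_gt (hr y0)) (ne_of_gt h)] at hlog
        have := mul_lt_mul_of_pos_left hlog h
        calc p y0 * (Real.log (r y0) - Real.log (p y0)) < p y0 * (r y0 / p y0 - 1) := this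
          _ = r y0 - p y0 := by field_simp
  have hsum : ∑ y, (r y - p y) = 0 := by
    rw [Finset.sum_sub_distrib, hr1, hp1]; ring
  have hneg : ∑ y, p y * (Real.log (p y) - Real.log (r y))
      = -∑ y, p y * (Real.log (r y) - Real.log (p y)) := by
    rw [← Finset.sum_neg_distrib]
    exact Finset.sum_congr rfl fun y _ => by ring
  rw [hneg]
  linarith [key, hsum]

/-- The objective `p ↦ Σ u·p + (1/λ)·KL(p‖q) + μ·H(p)` attains a unique minimum
over the probability simplex, at the Gibbs distribution. -/
theorem stmt0 {Y : Type*} [Fintype Y] [Nonempty Y]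
    (q : Y → ℝ) (hq : ∀ y, 0 < q y) (hq1 : ∑ y, q y = 1)
    (u : Y → ℝ) (lam mu : ℝ) (hlam : 0 < lam) (hmu : mu < 1 / lam)
    (kappa beta : ℝ) (hk : kappa = 1 / lam - mu) (hb : beta = 1 / (1 - lam * mu))
    (phat : Y → ℝ)
    (hphat : ∀ y, phat y =
      Real.exp (-(u y) / kappa) * q y ^ beta /
        ∑ z, Real.exp (-(u z) / kappa) * q z ^ beta) :
    ((∀ y, 0 ≤ phat y) ∧ ∑ y, phat y = 1) ∧
    (∀ p : Y → ℝ, (∀ y, 0 ≤ p y) → (∑ y, p y = 1) → p ≠ phat →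
      (∑ y, u y * phat y) + (1 / lam) * klDiv phat q + mu * shannonEntropy phat <
      (∑ y, u y * p y) + (1 / lam) * klDiv p q + mu * shannonEntropy p) := by
  have hlam' : lam ≠ 0 := ne_of_gt hlam
  have h1m : 0 < 1 - lam * mu := by
    have h := mul_lt_mul_of_pos_left hmu hlam
    rw [mul_one_div, div_self hlam'] at h
    linarith
  have hκ : 0 < kappa := by rw [hk]; linarith
  have hκ' : kappa ≠ 0 := ne_of_gt hκ
  have hkb : kappa * beta = 1 / lam := by
    rw [hk, hb]; field_simp
  set w : Y → ℝ := fun y => Real.exp (-(u y) / kappa) * q y ^ beta with hw_def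
  have hw : ∀ y, 0 < w y := fun y =>
    mul_pos (Real.exp_pos _) (Real.rpow_pos_of_pos (hq y) _)
  set Z : ℝ := ∑ z, w z with hZ_def
  have hZ : 0 < Z := Finset.sum_pos (fun y _ => hw y) Finset.univ_nonempty
  have hphat' : ∀ y, phat y = w y / Z := hphat
  have hphat_pos : ∀ y, 0 < phat y := fun y => by
    rw [hphat' y]; exact div_pos (hw y) hZ
  have hphat1 : ∑ y, phat y = 1 := by
    simp only [hphat']
    rw [← Finset.sum_div, ← hZ_def, div_self (ne_of_gt hZ)]
  have hlogw : ∀ y, Real.log (w y) = -(u y) / kappa + beta * Real.log (q y) := by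
    intro y
    rw [hw_def]
    rw [Real.log_mul (Real.exp_ne_zero _) (ne_of_gt (Real.rpow_pos_of_pos (hq y) _)),
      Real.log_exp, Real.log_rpow (hq y)]
  -- key identity
  have hF : ∀ p : Y → ℝ, (∀ y, 0 ≤ p y) →
      (∑ y, u y * p y) + (1 / lam) * klDiv p q + mu * shannonEntropy p
        = ∑ y, kappa * (p y * (Real.log (p y) - Real.log (w y))) := by
    intro p hp
    rw [klDiv, shannonEntropy, mul_neg, Finset.mul_sum, Finset.mul_sum,
      ← Finset.sum_neg_distrib, ← Finset.sum_add_distrib]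
    rw [← Finset.sum_add_distrib]
    apply Finset.sum_congr rfl
    intro y _
    rcases eq_or_lt_of_le (hp y) with h | h
    · simp [← h]
    · rw [Real.log_div (ne_of_gt h) (ne_of_gt (hq y)), hlogw y]
      linear_combination (p y * Real.log (q y)) * hkb - (p y * Real.log (p y)) * hk -
        (u y * p y) * mul_inv_cancel₀ hκ'
  have hlogphat : ∀ y, Real.log (phat y) = Real.log (w y) - Real.log Z := by
    intro y
    rw [hphat' y, Real.log_div (ne_of_gt (hw y)) (ne_of_gt hZ)]
  -- rewrite in terms of relative entropy to phat
  have hF2 : ∀ p : Y → ℝ, (∀ y, 0 ≤ p y) → (∑ y, p y = 1) →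
      (∑ y, u y * p y) + (1 / lam) * klDiv p q + mu * shannonEntropy p
        = kappa * (∑ y, p y * (Real.log (p y) - Real.log (phat y))) - kappa * Real.log Z := by
    intro p hp hp1
    rw [hF p hp]
    have : ∀ y, kappa * (p y * (Real.log (p y) - Real.log (w y)))
        = kappa * (p y * (Real.log (p y) - Real.log (phat y))) - kappa * (p y * Real.log Z) := by
      intro y
      rw [hlogphat y]; ring
    simp only [this]
    rw [Finset.sum_sub_distrib, ← Finset.mul_sum, ← Finset.mul_sum, ← Finset.sum_mul, hp1,
      one_mul]
  refine ⟨⟨fun y => le_of_lt (hphat_pos y), hphat1⟩, ?_⟩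
  intro p hp hp1 hne
  rw [hF2 p hp hp1, hF2 phat (fun y => le_of_lt (hphat_pos y)) hphat1]
  have h0 : ∑ y, phat y * (Real.log (phat y) - Real.log (phat y)) = 0 := by
    simp
  rw [h0]
  have hg := gibbs_aux p phat hp hp1 hphat_pos hphat1 hne
  nlinarith [mul_pos hκ hg]
end

section
/- Fix λ > 0, a finite set Y, a full-support distribution q on Y, and u : Y → ℝ. Assume that u is not of the form u(y) = b₁ + b₂·log q(y) for any constants b₁, b₂ ∈ ℝ. For μ < 1/λ, let p̂_μ denote the Gibbs minimizer p̂_μ(y) ∝ exp(−u(y)/κ)·q(y)^β with κ = 1/λ − μ and β = 1/(1−λμ). Then the map μ ↦ H(p̂_μ) (Shannon entropy of the worst-case distortion) is strictly decreasing on (−∞, 1/λ). -/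
open Finset Real

/-!
With `φ = log q - λ u`, the distortion `p̂_μ` is the Gibbs distribution `p_t ∝ exp (t φ)` at
`t = 1 / (1 - λ μ)`, increasing in `μ`, and `H (p_t) = log Z t - t m t` with `m t` the mean of `φ`
under `p_t`. For `0 ≤ s < t`, Gibbs' inequality gives `log Z t - log Z s < (t - s) m t` (strict
since `φ` is nonconstant) and, in the other direction, `(t - s) m s ≤ log Z t - log Z s`. Hence
`m s < m t`, and `H (p_t) < log Z s - s m t ≤ log Z s - s m s = H (p_s)`.
-/

theorem mul_log_sub_mul_log_le {a b : ℝ} (ha : 0 < a) (hb : 0 < b) :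
    a * log b - a * log a ≤ b - a := by
  rw [← mul_sub, ← log_div hb.ne' ha.ne']
  calc a * log (b / a) ≤ a * (b / a - 1) :=
        mul_le_mul_of_nonneg_left (log_le_sub_one_of_pos (div_pos hb ha)) ha.le
    _ = b - a := by field_simp

theorem mul_log_sub_mul_log_lt {a b : ℝ} (ha : 0 < a) (hb : 0 < b) (hab : a ≠ b) :
    a * log b - a * log a < b - a := by
  rw [← mul_sub, ← log_div hb.ne' ha.ne']
  have hba : b / a ≠ 1 := fun h => hab ((div_eq_one_iff_eq ha.ne').1 h).symm
  calc a * log (b / a) < a * (b / a - 1) :=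
        mul_lt_mul_of_pos_left (log_lt_sub_one_of_pos (div_pos hb ha) hba) ha
    _ = b - a := by field_simp

section GibbsInequality

variable {Y : Type*} [Fintype Y] {p q : Y → ℝ}

theorem sum_mul_log_lt_sum_mul_log_of_ne (hp : ∀ y, 0 < p y) (hq : ∀ y, 0 < q y)
    (hsum : ∑ y, q y ≤ ∑ y, p y) (hpq : p ≠ q) :
    ∑ y, p y * log (q y) < ∑ y, p y * log (p y) := by
  obtain ⟨y₀, hy₀⟩ := Function.ne_iff.1 hpq
  have hlt : ∑ y, (p y * log (q y) - p y * log (p y)) < ∑ y, (q y - p y) :=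
    Finset.sum_lt_sum (fun y _ => mul_log_sub_mul_log_le (hp y) (hq y))
      ⟨y₀, mem_univ _, mul_log_sub_mul_log_lt (hp y₀) (hq y₀) hy₀⟩
  rw [sum_sub_distrib, sum_sub_distrib] at hlt
  linarith

theorem sum_mul_log_le_sum_mul_log (hp : ∀ y, 0 < p y) (hq : ∀ y, 0 < q y)
    (hsum : ∑ y, q y ≤ ∑ y, p y) :
    ∑ y, p y * log (q y) ≤ ∑ y, p y * log (p y) := by
  rcases eq_or_ne p q with rfl | hpq
  · exact le_rfl
  · exact (sum_mul_log_lt_sum_mul_log_of_ne hp hq hsum hpq).le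

end GibbsInequality

section GibbsFamily

variable {Y : Type*} [Fintype Y] (φ : Y → ℝ)

noncomputable def partitionFn (t : ℝ) : ℝ := ∑ y, exp (t * φ y)

noncomputable def gibbs (t : ℝ) (y : Y) : ℝ := exp (t * φ y) / partitionFn φ t

variable [Nonempty Y] (s t : ℝ)

theorem partitionFn_pos : 0 < partitionFn φ t :=
  sum_pos (fun _ _ => exp_pos _) univ_nonempty

theorem gibbs_pos (y : Y) : 0 < gibbs φ t y :=
  div_pos (exp_pos _) (partitionFn_pos φ t)

theorem sum_gibbs : ∑ y, gibbs φ t y = 1 := by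
  simp only [gibbs]
  rw [← sum_div, ← partitionFn, div_self (partitionFn_pos φ t).ne']

theorem log_gibbs (y : Y) : log (gibbs φ t y) = t * φ y - log (partitionFn φ t) := by
  rw [gibbs.eq_1, log_div (exp_ne_zero _) (partitionFn_pos φ t).ne', log_exp]

theorem sum_gibbs_mul_log_gibbs :
    ∑ y, gibbs φ s y * log (gibbs φ t y) =
      t * ∑ y, gibbs φ s y * φ y - log (partitionFn φ t) := by
  simp only [log_gibbs, mul_sub, sum_sub_distrib, ← sum_mul, sum_gibbs, one_mul, mul_sum]
  congr 1
  exact sum_congr rfl fun y _ => by ring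

theorem shannonEntropy_gibbs :
    shannonEntropy (gibbs φ t) = log (partitionFn φ t) - t * ∑ y, gibbs φ t y * φ y := by
  rw [shannonEntropy, sum_gibbs_mul_log_gibbs]
  ring

variable {φ s t} in
theorem gibbs_ne_gibbs (hφ : ¬ ∃ c, ∀ y, φ y = c) (hst : s ≠ t) : gibbs φ s ≠ gibbs φ t := by
  intro h
  refine hφ ⟨(log (partitionFn φ s) - log (partitionFn φ t)) / (s - t), fun y => ?_⟩
  have hy := congrArg (fun p => log (p y)) h
  simp only [log_gibbs] at hy
  rw [eq_div_iff (sub_ne_zero.2 hst)]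
  linarith

end GibbsFamily

theorem strictAntiOn_shannonEntropy_gibbs {Y : Type*} [Fintype Y] {φ : Y → ℝ}
    (hφ : ¬ ∃ c, ∀ y, φ y = c) :
    StrictAntiOn (fun t => shannonEntropy (gibbs φ t)) (Set.Ici 0) := by
  have : Nonempty Y := by
    by_contra hY
    exact hφ ⟨0, fun y => (hY ⟨y⟩).elim⟩
  intro s hs t _ hst
  have hstrict := sum_mul_log_lt_sum_mul_log_of_ne (gibbs_pos φ t) (gibbs_pos φ s)
    (by rw [sum_gibbs, sum_gibbs]) (gibbs_ne_gibbs hφ hst.ne')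
  have hweak := sum_mul_log_le_sum_mul_log (gibbs_pos φ s) (gibbs_pos φ t)
    (by rw [sum_gibbs, sum_gibbs])
  simp only [sum_gibbs_mul_log_gibbs] at hstrict hweak
  simp only [shannonEntropy_gibbs]
  set m := fun r => ∑ y, gibbs φ r y * φ y
  have hmean : m s ≤ m t :=
    (sub_pos.1 (pos_of_mul_pos_right (a := t - s) (by linarith) (sub_pos.2 hst).le)).le
  linarith [mul_le_mul_of_nonneg_left hmean (Set.mem_Ici.1 hs)]

theorem exp_neg_div_mul_rpow_eq_exp {x a lam mu : ℝ} (hx : 0 < x) (hlam : lam ≠ 0) :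
    exp (-a / (1 / lam - mu)) * x ^ (1 / (1 - lam * mu)) =
      exp (1 / (1 - lam * mu) * (log x - lam * a)) := by
  rw [rpow_def_of_pos hx, ← exp_add, show 1 / lam - mu = (1 - lam * mu) / lam by field_simp,
    div_div_eq_mul_div]
  congr 1
  ring

theorem stmt4_general {Y : Type*} [Fintype Y]
    (q : Y → ℝ) (hq : ∀ y, 0 < q y)
    (u : Y → ℝ) (lam : ℝ) (hlam : 0 < lam)
    (hu : ¬ ∃ b₁ b₂ : ℝ, ∀ y, u y = b₁ + b₂ * Real.log (q y))
    (phat : ℝ → Y → ℝ)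
    (hphat : ∀ mu y, phat mu y =
      Real.exp (-(u y) / (1 / lam - mu)) * q y ^ (1 / (1 - lam * mu)) /
        ∑ z, Real.exp (-(u z) / (1 / lam - mu)) * q z ^ (1 / (1 - lam * mu))) :
    StrictAntiOn (fun mu => shannonEntropy (phat mu)) (Set.Iio (1 / lam)) := by
  set φ : Y → ℝ := fun y => log (q y) - lam * u y
  have hφ : ¬ ∃ c, ∀ y, φ y = c := fun ⟨c, hc⟩ =>
    hu ⟨-c / lam, 1 / lam, fun y => by field_simp; linarith [hc y]⟩
  have hpos : ∀ mu ∈ Set.Iio (1 / lam), 0 < 1 - lam * mu := fun mu hmu =>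
    sub_pos.2 ((lt_div_iff₀' hlam).1 hmu)
  have hphat_gibbs : phat = fun mu => gibbs φ (1 / (1 - lam * mu)) := by
    funext mu y
    simp only [hphat, exp_neg_div_mul_rpow_eq_exp (hq _) hlam.ne', gibbs, partitionFn, φ]
  subst hphat_gibbs
  refine (strictAntiOn_shannonEntropy_gibbs hφ).comp_strictMonoOn (fun a _ b hb hab => ?_)
    fun mu hmu => Set.mem_Ici.2 (one_div_pos.2 (hpos mu hmu)).le
  exact one_div_lt_one_div_of_lt (hpos b hb)
    (sub_lt_sub_left (mul_lt_mul_of_pos_left hab hlam) 1)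

/-- The Shannon entropy of the worst-case (Gibbs) distortion is strictly
decreasing in the complexity-aversion parameter `μ` on `(−∞, 1/λ)`, provided
the payoff is not an affine function of `log q`. -/
theorem stmt4 {Y : Type*} [Fintype Y] [Nonempty Y]
    (q : Y → ℝ) (hq : ∀ y, 0 < q y) (hq1 : ∑ y, q y = 1)
    (u : Y → ℝ) (lam : ℝ) (hlam : 0 < lam)
    (hu : ¬ ∃ b₁ b₂ : ℝ, ∀ y, u y = b₁ + b₂ * Real.log (q y))
    (phat : ℝ → Y → ℝ)
    (hphat : ∀ mu y, phat mu y =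
      Real.exp (-(u y) / (1 / lam - mu)) * q y ^ (1 / (1 - lam * mu)) /
        ∑ z, Real.exp (-(u z) / (1 / lam - mu)) * q z ^ (1 / (1 - lam * mu))) :
    StrictAntiOn (fun mu => shannonEntropy (phat mu)) (Set.Iio (1 / lam)) :=
  stmt4_general q hq u lam hlam hu phat hphat
end

section
/- Let Y be a finite set, q ∈ Δ(Y), λ > 0, and u : Y → ℝ. If μ ≥ 1/λ (so that κ = 1/λ − μ ≤ 0), then the minimum over p ∈ Δ(Y) of [Σ_y u(y)p(y) + (1/λ)KL(p‖q) + μH(p)] equals the minimum over y in the support of q of [u(y) + (1/λ)·log(1/q(y))], and this minimum is attained by a Dirac measure δ_{y*} at any minimizer y* of y ↦ u(y) − (1/λ)log q(y) on the support of q. -/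
open Finset Real

lemma dirac_val {Y : Type*} [Fintype Y] [DecidableEq Y] (q u : Y → ℝ) (lam mu : ℝ)
    (ystar : Y) :
    (∑ y, u y * (if y = ystar then (1 : ℝ) else 0)) +
      (1 / lam) * klDiv (fun y => if y = ystar then (1 : ℝ) else 0) q +
      mu * shannonEntropy (fun y => if y = ystar then (1 : ℝ) else 0)
    = u ystar + (1 / lam) * Real.log (1 / q ystar) := by
  have h1 : (∑ y, u y * (if y = ystar then (1 : ℝ) else 0)) = u ystar := by
    rw [Finset.sum_eq_single ystar]
    · simp
    · intro b _ hb; simp [hb]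
    · intro h; exact absurd (Finset.mem_univ _) h
  have h2 : klDiv (fun y => if y = ystar then (1 : ℝ) else 0) q
      = Real.log (1 / q ystar) := by
    unfold klDiv
    rw [Finset.sum_eq_single ystar]
    · simp
    · intro b _ hb; simp [hb]
    · intro h; exact absurd (Finset.mem_univ _) h
  have h3 : shannonEntropy (fun y => if y = ystar then (1 : ℝ) else 0) = 0 := by
    unfold shannonEntropy
    rw [Finset.sum_eq_single ystar]
    · simp
    · intro b _ hb; simp [hb]
    · intro h; exact absurd (Finset.mem_univ _) h
  rw [h1, h2, h3]; ring

/-- When `μ ≥ 1/λ`, the complexity-augmented criterion (restricted to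
distortions absolutely continuous w.r.t. `q`, since otherwise `KL = +∞`)
collapses to the minimum over the support of `q` of
`u(y) + (1/λ) log(1/q(y))`, attained by a Dirac measure. -/
theorem stmt5 {Y : Type*} [Fintype Y] [DecidableEq Y]
    (q : Y → ℝ) (hq0 : ∀ y, 0 ≤ q y) (hq1 : ∑ y, q y = 1)
    (u : Y → ℝ) (lam mu : ℝ) (hlam : 0 < lam) (hmu : 1 / lam ≤ mu)
    (s : Finset Y) (hs : s = Finset.univ.filter fun y => q y ≠ 0)
    (hsne : s.Nonempty)
    (m : ℝ) (hm : m = s.inf' hsne (fun y => u y + (1 / lam) * Real.log (1 / q y))) :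
    IsLeast
      {v : ℝ | ∃ p : Y → ℝ, (∀ y, 0 ≤ p y) ∧ (∑ y, p y = 1) ∧
        (∀ y, q y = 0 → p y = 0) ∧
        v = (∑ y, u y * p y) + (1 / lam) * klDiv p q + mu * shannonEntropy p}
      m ∧
    (∀ ystar : Y, ystar ∈ s →
      (∀ y ∈ s, u ystar + (1 / lam) * Real.log (1 / q ystar) ≤
                u y + (1 / lam) * Real.log (1 / q y)) →
      (∑ y, u y * (if y = ystar then (1 : ℝ) else 0)) +
        (1 / lam) * klDiv (fun y => if y = ystar then (1 : ℝ) else 0) q +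
        mu * shannonEntropy (fun y => if y = ystar then (1 : ℝ) else 0) = m) := by
  set g : Y → ℝ := fun y => u y + (1 / lam) * Real.log (1 / q y) with hg
  obtain ⟨y₀, hy₀s, hy₀eq⟩ := Finset.exists_mem_eq_inf' hsne g
  have hmq : m = g y₀ := by rw [hm, hy₀eq]
  -- key rewrite of the objective
  have key : ∀ p : Y → ℝ, (∀ y, 0 ≤ p y) → (∀ y, q y = 0 → p y = 0) →
      (∑ y, u y * p y) + (1 / lam) * klDiv p q + mu * shannonEntropy p
      = (∑ y, p y * g y) + (1 / lam - mu) * ∑ y, p y * Real.log (p y) := by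
    intro p hp habs
    have hpt : ∀ y, p y * Real.log (p y / q y)
        = p y * Real.log (1 / q y) + p y * Real.log (p y) := by
      intro y
      by_cases hpy : p y = 0
      · simp [hpy]
      · have hqy : q y ≠ 0 := fun h => hpy (habs y h)
        rw [Real.log_div hpy hqy, Real.log_div one_ne_zero hqy, Real.log_one]
        ring
    have hkl : klDiv p q
        = (∑ y, p y * Real.log (1 / q y)) + ∑ y, p y * Real.log (p y) := by
      unfold klDiv
      rw [← Finset.sum_add_distrib]
      exact Finset.sum_congr rfl fun y _ => hpt y
    have hsum : (∑ y, p y * g y)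
        = (∑ y, u y * p y) + ∑ y, (1 / lam) * (p y * Real.log (1 / q y)) := by
      rw [← Finset.sum_add_distrib]
      refine Finset.sum_congr rfl fun y _ => ?_
      simp only [hg]; ring
    rw [hkl, hsum, ← Finset.mul_sum]
    unfold shannonEntropy
    ring
  have hmem : ∀ ystar : Y, ystar ∈ s → (∀ y ∈ s, g ystar ≤ g y) →
      (∑ y, u y * (if y = ystar then (1 : ℝ) else 0)) +
        (1 / lam) * klDiv (fun y => if y = ystar then (1 : ℝ) else 0) q +
        mu * shannonEntropy (fun y => if y = ystar then (1 : ℝ) else 0) = m := by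
    intro ystar hyss hymin
    rw [dirac_val, hmq]
    exact le_antisymm (hymin y₀ hy₀s) (by rw [← hmq, hm]; exact Finset.inf'_le _ hyss)
  constructor
  · constructor
    · -- membership: Dirac at y₀
      refine ⟨fun y => if y = y₀ then 1 else 0, fun y => by positivity, by simp, ?_, ?_⟩
      · intro y hy
        have : y ∉ s := by rw [hs]; simp [hy]
        have hne : y ≠ y₀ := fun h => this (h ▸ hy₀s)
        simp [hne]
      · rw [hmem y₀ hy₀s (fun y hy => by rw [← hy₀eq, ← hm, hm]; exact Finset.inf'_le _ hy)]
    · -- lower bound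
      rintro v ⟨p, hp, hp1, habs, rfl⟩
      rw [key p hp habs]
      have h1 : m ≤ ∑ y, p y * g y := by
        have hpt : ∀ y, m * p y ≤ p y * g y := by
          intro y
          by_cases hqy : q y = 0
          · rw [habs y hqy]; simp
          · have hys : y ∈ s := by rw [hs]; simp [hqy]
            have hmg : m ≤ g y := by rw [hm]; exact Finset.inf'_le _ hys
            have := mul_le_mul_of_nonneg_right hmg (hp y)
            linarith [this]
        calc m = ∑ y, m * p y := by rw [← Finset.mul_sum, hp1, mul_one]
          _ ≤ ∑ y, p y * g y := Finset.sum_le_sum fun y _ => hpt y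
      have h2 : 0 ≤ (1 / lam - mu) * ∑ y, p y * Real.log (p y) := by
        have hB : (∑ y, p y * Real.log (p y)) ≤ 0 := by
          apply Finset.sum_nonpos
          intro y _
          have hle1 : p y ≤ 1 := by
            rw [← hp1]
            exact Finset.single_le_sum (fun i _ => hp i) (Finset.mem_univ y)
          have := Real.log_nonpos (hp y) hle1
          nlinarith [hp y]
        nlinarith [hB, hmu]
      linarith
  · exact hmem
end

section
/- Home bias: Let Y = {y*, y₁, …, y_N} with N ≥ 2, and let binary utilities satisfy u(y*) = 1 and u(y_i) = 0 for all i. Fix δ ∈ (0,1), ε ∈ (0, δ/N), and define two distributions: q_d with q_d(y*) = 1−δ and q_d(y_i) = δ/N for all i; and q_f with q_f(y*) = 1−δ, q_f(y₁) = δ − (N−1)ε, and q_f(y_i) = ε for i = 2,…,N. For λ > 0 and μ ∈ [0, 1/λ), set κ = 1/λ − μ, β = 1/(1−λμ), and for a ∈ {d,f} define v(a) = −κ·log( e^{−1/κ}·(1−δ)^β + Σ_{i=1}^N q_a(y_i)^β ). Then v(d) = v(f) when μ = 0, and v(d) > v(f) for every μ ∈ (0, 1/λ). -/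
open Finset Real

/-! With β = 1/(1 - λμ) the normalizing constant is the sum of the β-th powers of the tail
probabilities. For μ = 0 we have β = 1 and both sums equal δ; for μ > 0 we have β > 1, and
strict Jensen for x ↦ x^β shows that among tails of total mass δ the uniform one has the smallest
sum of β-th powers, so the foreign value is strictly smaller. -/

theorem sum_ite_eq_const_add {ι : Type*} [Fintype ι] [DecidableEq ι] (j : ι) (a b : ℝ) :
    ∑ i, (if i = j then a else b) = a + (Fintype.card ι - 1) * b := by
  rw [Fintype.sum_eq_add_sum_compl j, if_pos rfl, Finset.sum_congr rfl fun i hi =>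
    if_neg (Finset.mem_compl.mp hi ∘ Finset.mem_singleton.mpr), Finset.sum_const,
    Finset.card_compl, Finset.card_singleton, nsmul_eq_mul,
    Nat.cast_sub (Fintype.card_pos_iff.mpr ⟨j⟩)]
  simp

theorem card_mul_rpow_mean_lt_sum_rpow {ι : Type*} [Fintype ι] {β : ℝ} (hβ : 1 < β)
    {q : ι → ℝ} (hq : ∀ i, 0 ≤ q i) {j k : ι} (hjk : q j ≠ q k) :
    Fintype.card ι * ((∑ i, q i) / Fintype.card ι) ^ β < ∑ i, q i ^ β := by
  have hn : (0 : ℝ) < Fintype.card ι := Nat.cast_pos.mpr (Fintype.card_pos_iff.mpr ⟨j⟩)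
  have hjensen := (strictConvexOn_rpow hβ).map_sum_lt (t := univ)
    (w := fun _ => (Fintype.card ι : ℝ)⁻¹) (p := q) (fun _ _ => inv_pos.mpr hn)
    (by simp [hn.ne']) (fun i _ => Set.mem_Ici.mpr (hq i)) ⟨j, mem_univ _, k, mem_univ _, hjk⟩
  simp only [smul_eq_mul, ← Finset.mul_sum] at hjensen
  rw [div_eq_inv_mul]
  calc _ < (Fintype.card ι : ℝ) * ((Fintype.card ι : ℝ)⁻¹ * ∑ i, q i ^ β) := by gcongr
    _ = ∑ i, q i ^ β := by field_simp

/-- Home bias: with identical reference downside mass δ, the domestic asset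
(uniform tail) and the foreign asset (concentrated tail) have equal values
when μ = 0, and the domestic value is strictly larger for any μ ∈ (0, 1/λ). -/
theorem stmt11 (N : ℕ) (hN : 2 ≤ N)
    (δ ε lam mu : ℝ)
    (hδ0 : 0 < δ) (hδ1 : δ < 1) (hε : 0 < ε) (hεδ : ε < δ / N)
    (hlam : 0 < lam) (hmu : mu < 1 / lam)
    (kappa beta : ℝ) (hk : kappa = 1 / lam - mu) (hb : beta = 1 / (1 - lam * mu))
    (qf : Fin N → ℝ)
    (hqf : ∀ i, qf i = if i = (⟨0, by omega⟩ : Fin N) then δ - (N - 1) * ε else ε)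
    (vd vf : ℝ)
    (hvd : vd = -kappa * Real.log
      (Real.exp (-1 / kappa) * (1 - δ) ^ beta + ∑ _i : Fin N, (δ / N) ^ beta))
    (hvf : vf = -kappa * Real.log
      (Real.exp (-1 / kappa) * (1 - δ) ^ beta + ∑ i : Fin N, qf i ^ beta)) :
    (mu = 0 → vd = vf) ∧ (0 < mu → vf < vd) := by
  have hNpos : (0 : ℝ) < N := by positivity
  have hεN : ε * N < δ := (lt_div_iff₀ hNpos).mp hεδ
  have hε_lt_head : ε < δ - (N - 1) * ε := by linarith
  have hsum_qf : ∑ i, qf i = δ := by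
    simp only [hqf, sum_ite_eq_const_add, Fintype.card_fin]
    ring
  have hsum_d (b : ℝ) : ∑ _i : Fin N, (δ / N) ^ b = N * (δ / N) ^ b := by simp
  rw [hvd, hvf]
  constructor
  · rintro rfl
    obtain rfl : beta = 1 := by simp [hb]
    rw [hsum_d]
    simp only [rpow_one, hsum_qf]
    field_simp
  · intro hmu_pos
    have hβ : 1 < beta := by
      rw [hb]
      exact one_lt_one_div (by nlinarith [(lt_div_iff₀ hlam).mp hmu]) (by nlinarith)
    have hjensen : N * (δ / N) ^ beta < ∑ i, qf i ^ beta := by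
      have hqf_nonneg (i : Fin N) : 0 ≤ qf i := by rw [hqf]; split_ifs <;> linarith
      have hqf_ne : qf ⟨0, by omega⟩ ≠ qf ⟨1, by omega⟩ := by simp [hqf, hε_lt_head.ne']
      simpa [hsum_qf] using card_mul_rpow_mean_lt_sum_rpow hβ hqf_nonneg hqf_ne
    have hkappa : 0 < kappa := by rw [hk]; linarith
    have hreference : 0 ≤ exp (-1 / kappa) * (1 - δ) ^ beta := by
      have : 0 < 1 - δ := by linarith
      positivity
    rw [neg_mul, neg_mul, neg_lt_neg_iff, hsum_d]
    gcongr
end
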